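/- arXiv:1508.02662 — 2 statements merged into one kernel-verified Lean document; each statement's English description precedes it below -/
import Mathlib

section
/- Let G be an infinite abelian group, h ≥ 2, and A ⊆ G with hA ∼ G. Then A has at most h − 1 exceptional elements, where a ∈ A is exceptional if A \ {a} is not a basis of G of any order. -/
open Pointwise

/-- `itSum A n` is the `n`-fold sumset of `A` (sums of exactly `n` elements of `A`). -/
def itSum {G : Type*} [AddCommGroup G] (A : Set G) : ℕ → Set G
  | 0 => {0}
  | n + 1 => itSum A n + A

/-- `SimEq A B` means the symmetric difference of `A` and `B` is finite. -/
def SimEq {G : Type*} [AddCommGroup G] (A B : Set G) : Prop :=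
  (symmDiff A B).Finite

section helpers

variable {G : Type*} [AddCommGroup G] {A B : Set G} {x y c : G}

lemma itSum_zero (A : Set G) : itSum A 0 = {0} := rfl

lemma itSum_succ (A : Set G) (n : ℕ) : itSum A (n + 1) = itSum A n + A := rfl

lemma mem_itSum_one (hx : x ∈ A) : x ∈ itSum A 1 := by
  rw [itSum_succ, itSum_zero]
  exact ⟨0, rfl, x, hx, zero_add x⟩

lemma add_mem_itSum {m n : ℕ} (hx : x ∈ itSum A m) (hy : y ∈ itSum A n) :
    x + y ∈ itSum A (m + n) := by
  induction n generalizing y with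
  | zero => simp only [itSum_zero, Set.mem_singleton_iff] at hy; simpa [hy]
  | succ n ih =>
    rcases hy with ⟨y', hy', z, hz, rfl⟩
    exact ⟨x + y', ih hy', z, hz, by abel⟩

lemma nsmul_mem_itSum {m : ℕ} (n : ℕ) (hx : x ∈ itSum A m) : n • x ∈ itSum A (n * m) := by
  induction n with
  | zero => simp [itSum_zero]
  | succ n ih =>
    rw [succ_nsmul, Nat.succ_mul]
    exact add_mem_itSum ih hx

lemma itSum_sub_nsmul_mem (H : AddSubgroup G) (hB : ∀ x ∈ B, x - c ∈ H) {k : ℕ} :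
    ∀ y ∈ itSum B k, y - k • c ∈ H := by
  induction k with
  | zero => intro y hy; rw [itSum_zero, Set.mem_singleton_iff] at hy; simp [hy, H.zero_mem]
  | succ k ih =>
    rintro y ⟨y', hy', z, hz, rfl⟩
    have : y' + z - (k + 1) • c = (y' - k • c) + (z - c) := by
      rw [succ_nsmul]; abel
    rw [this]
    exact H.add_mem (ih y' hy') (hB z hz)

lemma itSum_finite (hA : A.Finite) (n : ℕ) : (itSum A n).Finite := by
  induction n with
  | zero => simp [itSum_zero]
  | succ n ih => exact ih.add hA

lemma itSum_decomp (a : G) {n : ℕ} :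
    ∀ x ∈ itSum A n, ∃ j ≤ n, ∃ y ∈ itSum (A \ {a}) (n - j), x = j • a + y := by
  induction n with
  | zero =>
    intro x hx
    rw [itSum_zero, Set.mem_singleton_iff] at hx
    exact ⟨0, le_refl 0, 0, by simp [itSum_zero], by simp [hx]⟩
  | succ n ih =>
    rintro x ⟨x', hx', z, hz, rfl⟩
    obtain ⟨j, hj, y, hy, rfl⟩ := ih x' hx'
    by_cases hza : z = a
    · refine ⟨j + 1, by omega, y, ?_, ?_⟩
      · have : n + 1 - (j + 1) = n - j := by omega
        rwa [this]
      · subst hza; rw [succ_nsmul]; abel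
    · refine ⟨j, by omega, y + z, ?_, by abel⟩
      have : n + 1 - j = (n - j) + 1 := by omega
      rw [this]
      exact ⟨y, hy, z, ⟨hz, hza⟩, rfl⟩

end helpers

section multi

variable {G : Type*} [AddCommGroup G] {A : Set G}

lemma itSum_decomp_multi {N : ℕ} (a : Fin N → G) {n : ℕ} :
    ∀ x ∈ itSum A n, ∃ m : Fin N → ℕ, (∑ i, m i) ≤ n ∧
      ∃ y ∈ itSum (A \ Set.range a) (n - ∑ i, m i), x = (∑ i, m i • a i) + y := by
  induction n with
  | zero =>
    intro x hx
    rw [itSum_zero, Set.mem_singleton_iff] at hx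
    exact ⟨fun _ => 0, by simp, 0, by simp [itSum_zero], by simp [hx]⟩
  | succ n ih =>
    rintro x ⟨x', hx', z, hz, rfl⟩
    obtain ⟨m, hm, y, hy, rfl⟩ := ih x' hx'
    by_cases hza : z ∈ Set.range a
    · obtain ⟨i₀, rfl⟩ := hza
      refine ⟨Function.update m i₀ (m i₀ + 1), ?_, y, ?_, ?_⟩
      case _ =>
        have h1 : ∑ i, Function.update m i₀ (m i₀ + 1) i = (∑ i, m i) + 1 := by
          rw [← Finset.add_sum_erase _ (Function.update m i₀ (m i₀ + 1)) (Finset.mem_univ i₀),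
            ← Finset.add_sum_erase _ m (Finset.mem_univ i₀), Function.update_self,
            Finset.sum_congr rfl
              (fun x hx => Function.update_of_ne (Finset.ne_of_mem_erase hx) _ _)]
          omega
        rw [h1]; omega
      case _ =>
        have h1 : ∑ i, Function.update m i₀ (m i₀ + 1) i = (∑ i, m i) + 1 := by
          rw [← Finset.add_sum_erase _ (Function.update m i₀ (m i₀ + 1)) (Finset.mem_univ i₀),
            ← Finset.add_sum_erase _ m (Finset.mem_univ i₀), Function.update_self,
            Finset.sum_congr rfl
              (fun x hx => Function.update_of_ne (Finset.ne_of_mem_erase hx) _ _)]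
          omega
        rw [h1]
        have h2 : n + 1 - ((∑ i, m i) + 1) = n - ∑ i, m i := by omega
        rwa [h2]
      case _ =>
        have h3 : ∑ i, Function.update m i₀ (m i₀ + 1) i • a i
            = (∑ i, m i • a i) + a i₀ := by
          rw [← Finset.add_sum_erase _ (fun i => Function.update m i₀ (m i₀ + 1) i • a i)
              (Finset.mem_univ i₀),
            ← Finset.add_sum_erase _ (fun i => m i • a i) (Finset.mem_univ i₀)]
          simp only [Function.update_self]
          rw [Finset.sum_congr rfl
            (fun x hx => by rw [Function.update_of_ne (Finset.ne_of_mem_erase hx)])]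
          rw [succ_nsmul]
          abel
        rw [h3]
        exact add_right_comm _ _ _
    · refine ⟨m, by omega, y + z, ?_, by abel⟩
      have h4 : n + 1 - (∑ i, m i) = (n - ∑ i, m i) + 1 := by omega
      rw [h4]
      exact ⟨y, hy, z, ⟨hz, hza⟩, rfl⟩

/-- If the difference set of `A* = A \ {a}` generates the whole group and `itSum A h` is
cofinite, then some `itSum A* k` is cofinite. -/
lemma lemA {h : ℕ} (hh : 1 ≤ h) (a b : G) (hb : b ∈ A \ {a})
    (hcof : ((itSum A h)ᶜ : Set G).Finite)
    (htop : AddSubgroup.closure ((A \ {a}) - (A \ {a})) = ⊤) :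
    ∃ k, 1 ≤ k ∧ ((itSum (A \ {a}) k)ᶜ : Set G).Finite := by
  set As := A \ {a} with hAs
  -- express a - b as an element of (itSum As r) - (itSum As r)
  have key : ∃ r : ℕ, ∃ v ∈ itSum As r, ∃ u ∈ itSum As r, (a - b) + v = u := by
    have hmem : a - b ∈ AddSubgroup.closure (As - As) := by rw [htop]; trivial
    refine AddSubgroup.closure_induction ?_ ?_ ?_ ?_ hmem
    · rintro x ⟨p, hp, q, hq, rfl⟩
      exact ⟨1, q, mem_itSum_one hq, p, mem_itSum_one hp, sub_add_cancel p q⟩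
    · exact ⟨0, 0, rfl, 0, rfl, by abel⟩
    · rintro x y - - ⟨r₁, v₁, hv₁, u₁, hu₁, he₁⟩ ⟨r₂, v₂, hv₂, u₂, hu₂, he₂⟩
      refine ⟨r₁ + r₂, v₁ + v₂, add_mem_itSum hv₁ hv₂, u₁ + u₂, add_mem_itSum hu₁ hu₂, ?_⟩
      rw [← he₁, ← he₂]; abel
    · rintro x - ⟨r, v, hv, u, hu, he⟩
      exact ⟨r, u, hu, v, hv, by rw [← he]; abel⟩
  obtain ⟨r, v, hv, u, hu, hvu⟩ := key
  have hab : a + v = b + u := by rw [← hvu]; abel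
  refine ⟨h + h * r, by omega, ?_⟩
  -- every element of itSum A h, translated by h • v, lands in itSum As (h + h*r)
  have main : ∀ g ∈ itSum A h, g + h • v ∈ itSum As (h + h * r) := by
    intro g hg
    obtain ⟨j, hj, y, hy, rfl⟩ := itSum_decomp a g hg
    have e1 : j • a + y + h • v = j • (b + u) + ((h - j) • v + y) := by
      rw [← hab, smul_add]
      have hsplit : h • v = j • v + (h - j) • v := by
        rw [← add_nsmul]
        congr 1
        omega
      rw [hsplit]
      abel
    rw [e1]
    have m1 : j • (b + u) ∈ itSum As (j * (1 + r)) :=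
      nsmul_mem_itSum j (add_mem_itSum (mem_itSum_one hb) hu)
    have m2 : (h - j) • v ∈ itSum As ((h - j) * r) := nsmul_mem_itSum _ hv
    have m3 := add_mem_itSum (add_mem_itSum m1 m2) hy
    have harith : j * (1 + r) + (h - j) * r + (h - j) = h + h * r := by
      obtain ⟨j', rfl⟩ := Nat.le.dest hj
      have h1 : j + j' - j = j' := by omega
      rw [h1]; ring
    rwa [harith, add_assoc] at m3
  -- conclude cofiniteness
  have hsub : ((itSum As (h + h * r))ᶜ : Set G) ⊆ (fun z => z + h • v) '' ((itSum A h)ᶜ) := by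
    intro x hx
    exact ⟨x - h • v, fun hmem => hx (by simpa [sub_add_cancel] using main _ hmem),
      sub_add_cancel x (h • v)⟩
  exact (hcof.image _).subset hsub

end multi

section main

variable {G : Type*} [AddCommGroup G] [Infinite G]

lemma no_h_distinct (A : Set G) (h : ℕ) (hh : 2 ≤ h)
    (hcof : ((itSum A h)ᶜ : Set G).Finite) (a : Fin h → G) (hinj : Function.Injective a)
    (haA : ∀ i, a i ∈ A)
    (hexc : ∀ i, ¬ ∃ k, 1 ≤ k ∧ ((itSum (A \ {a i}) k)ᶜ : Set G).Finite) : False := by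
  classical
  -- `itSum A h` is infinite
  have hitinf : (itSum A h).Infinite := by
    intro hfin
    have : (Set.univ : Set G).Finite := by
      rw [← Set.union_compl_self (itSum A h)]
      exact hfin.union hcof
    exact Set.infinite_univ this
  -- `A` is infinite
  have hAinf : A.Infinite := fun hfin => hitinf (itSum_finite hfin h)
  -- pick a non-exceptional anchor point c
  obtain ⟨c, hcA, hcr⟩ := (hAinf.diff (Set.finite_range a)).nonempty
  set H : Fin h → AddSubgroup G := fun i => AddSubgroup.closure ((A \ {a i}) - (A \ {a i}))
    with hH_def
  have hgen : ∀ i, ∀ x ∈ A \ {a i}, ∀ y ∈ A \ {a i}, x - y ∈ H i := fun i x hx y hy =>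
    AddSubgroup.subset_closure (Set.sub_mem_sub hx hy)
  have hcAi : ∀ i, c ∈ A \ {a i} := fun i =>
    ⟨hcA, fun e => hcr ⟨i, (Set.mem_singleton_iff.1 e).symm⟩⟩
  have hne : ∀ i, H i ≠ ⊤ := fun i htop =>
    hexc i (lemA (by omega) (a i) c (hcAi i) hcof htop)
  have hEc : ∀ i, ∀ x ∈ A \ {a i}, x - c ∈ H i := fun i x hx => hgen i x hx c (hcAi i)
  set d : Fin h → G := fun i => a i - c with hd_def
  have hdij : ∀ i j, i ≠ j → d i ∈ H j := fun i j hij =>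
    hgen j (a i) ⟨haA i, fun e => hij (hinj (Set.mem_singleton_iff.1 e))⟩ c (hcAi j)
  -- covering of itSum A h by cosets of H i
  have hcover : ∀ i, ∀ g ∈ itSum A h, ∃ j ≤ h, g - ((j : ℕ) • a i + (h - j) • c) ∈ H i := by
    intro i g hg
    obtain ⟨j, hj, y, hy, rfl⟩ := itSum_decomp (a i) g hg
    refine ⟨j, hj, ?_⟩
    have hy' := itSum_sub_nsmul_mem (H i) (hEc i) y hy
    have he : j • a i + y - (j • a i + (h - j) • c) = y - (h - j) • c := by abel
    rwa [he]
  -- each H i is infinite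
  have hHiinf : ∀ i, ((H i : Set G)).Infinite := by
    intro i hfin
    apply hitinf
    have hsub : itSum A h ⊆
        ⋃ j ∈ Finset.range (h + 1), (fun z => z + ((j : ℕ) • a i + (h - j) • c)) ''
          (H i : Set G) := by
      intro g hg
      obtain ⟨j, hj, hmem⟩ := hcover i g hg
      exact Set.mem_biUnion (Finset.mem_coe.2 (Finset.mem_range.2 (by omega)))
        ⟨g - (j • a i + (h - j) • c), hmem, sub_add_cancel _ _⟩
    exact (Set.Finite.biUnion (Finset.range (h + 1)).finite_toSet
      (fun j _ => hfin.image _)).subset hsub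
  -- any coset of an infinite subgroup meets itSum A h
  have hmeet : ∀ (K : AddSubgroup G), ((K : Set G)).Infinite → ∀ g : G,
      ∃ g' ∈ itSum A h, g' - g ∈ K := by
    intro K hK g
    have hcosinf : ((fun z => z + g) '' (K : Set G)).Infinite :=
      hK.image ((add_left_injective g).injOn)
    obtain ⟨x, ⟨k, hk, rfl⟩, hx2⟩ := (hcosinf.diff hcof).nonempty
    refine ⟨k + g, not_not.1 hx2, by simpa⟩
  -- per-i congruence for every g
  have hquot : ∀ (g : G), ∀ i, ∃ j : Fin (h + 1),
      g - ((j : ℕ) • a i + (h - (j : ℕ)) • c) ∈ H i := by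
    intro g i
    obtain ⟨g', hg', hgg⟩ := hmeet (H i) (hHiinf i) g
    obtain ⟨j, hj, hj2⟩ := hcover i g' hg'
    refine ⟨⟨j, by omega⟩, ?_⟩
    have h3 := (H i).sub_mem hj2 hgg
    have he : g' - (j • a i + (h - j) • c) - (g' - g)
        = g - (j • a i + (h - j) • c) := by abel
    rw [he] at h3
    exact h3
  -- the intersection subgroup is infinite
  set Hfull : AddSubgroup G := ⨅ i, H i with hHfull_def
  have hHfullinf : ((Hfull : Set G)).Infinite := by
    intro hfin
    choose t ht using hquot
    have hcup : (Set.univ : Set G) ⊆ ⋃ f : Fin h → Fin (h + 1), {g | t g = f} :=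
      fun g _ => Set.mem_iUnion.2 ⟨t g, rfl⟩
    have hfib : ∀ f : Fin h → Fin (h + 1), ({g | t g = f} : Set G).Finite := by
      intro f
      rcases Set.eq_empty_or_nonempty {g | t g = f} with he | ⟨g₀, hg₀⟩
      · simp [he]
      · have hsub : {g : G | t g = f} ⊆ (fun z => z + g₀) '' (Hfull : Set G) := by
          intro x hx
          have hmem : x - g₀ ∈ Hfull := by
            rw [hHfull_def, AddSubgroup.mem_iInf]
            intro i
            have h1 := ht x i
            have h2 := ht g₀ i
            rw [Set.mem_setOf_eq] at hx hg₀
            rw [hx] at h1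
            rw [hg₀] at h2
            have h3 := (H i).sub_mem h1 h2
            have he2 : x - ((f i : ℕ) • a i + (h - (f i : ℕ)) • c)
                - (g₀ - ((f i : ℕ) • a i + (h - (f i : ℕ)) • c)) = x - g₀ := by abel
            rwa [he2] at h3
          exact ⟨x - g₀, hmem, sub_add_cancel _ _⟩
        exact (hfin.image _).subset hsub
    exact Set.infinite_univ ((Set.finite_iUnion hfib).subset hcup)
  -- d i ∉ H i
  have hdH : ∀ i, d i ∉ H i := by
    intro i hdi
    obtain ⟨d₀, hd₀⟩ : ∃ x, x ∉ H i := by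
      by_contra hall
      push_neg at hall
      exact hne i ((AddSubgroup.eq_top_iff' (H i)).2 hall)
    have hallc : ∀ x ∈ A, x - c ∈ H i := by
      intro x hx
      by_cases hxa : x = a i
      · rw [hxa]; exact hdi
      · exact hEc i x ⟨hx, hxa⟩
    have hdisj : ((fun z => z + (h • c + d₀)) '' (H i : Set G)) ⊆ (itSum A h)ᶜ := by
      rintro x ⟨k, hk, rfl⟩ hmem
      have h1 : k + (h • c + d₀) - h • c ∈ H i := itSum_sub_nsmul_mem (H i) hallc _ hmem
      have h2 : k + (h • c + d₀) - h • c - k = d₀ := by abel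
      have h3 := (H i).sub_mem h1 hk
      rw [h2] at h3
      exact hd₀ h3
    exact ((hHiinf i).image ((add_left_injective _).injOn)).mono hdisj hcof
  -- multi-decomposition plus congruences
  have hcong : ∀ g' ∈ itSum A h, ∃ m : Fin h → ℕ, (∑ k, m k) ≤ h ∧
      (∃ y ∈ itSum (A \ Set.range a) (h - ∑ k, m k), g' = (∑ k, m k • a k) + y) ∧
      ∀ i, g' - h • c - (m i) • d i ∈ H i := by
    intro g' hg'
    obtain ⟨m, hm, y, hy, rfl⟩ := itSum_decomp_multi a g' hg'
    refine ⟨m, hm, ⟨y, hy, rfl⟩, ?_⟩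
    intro i
    have hsplit : (h : ℕ) • c = (∑ k, m k) • c + (h - ∑ k, m k) • c := by
      rw [← add_nsmul]; congr 1; omega
    have hsum_d : ∑ k, m k • d k = (∑ k, m k • a k) - (∑ k, m k) • c := by
      simp only [hd_def, smul_sub]
      rw [Finset.sum_sub_distrib, ← Finset.sum_smul]
    have h1 : ∑ k ∈ Finset.univ.erase i, m k • d k = (∑ k, m k • d k) - m i • d i := by
      rw [← Finset.add_sum_erase _ (fun k => m k • d k) (Finset.mem_univ i)]
      abel
    have hid : (∑ k, m k • a k) + y - h • c - (m i) • d i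
        = (∑ k ∈ Finset.univ.erase i, m k • d k) + (y - (h - ∑ k, m k) • c) := by
      rw [h1, hsum_d, hsplit]; abel
    rw [hid]
    refine (H i).add_mem (AddSubgroup.sum_mem _ (fun k hk =>
      (H i).nsmul_mem (hdij k i (Finset.ne_of_mem_erase hk)) _)) ?_
    refine itSum_sub_nsmul_mem (H i) ?_ y hy
    intro x hx
    exact hEc i x ⟨hx.1, fun hxe => hx.2 ⟨i, (Set.mem_singleton_iff.1 hxe).symm⟩⟩
  -- the order e i of d i modulo H i exists
  have hex : ∀ i, ∃ n, 0 < n ∧ n • d i ∈ H i := by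
    intro i
    obtain ⟨g', hg', hgg⟩ := hmeet Hfull hHfullinf (h • c + (h + 1) • d i)
    obtain ⟨m, hm, -, hcongs⟩ := hcong g' hg'
    have hmi : m i ≤ h := le_trans (Finset.single_le_sum (fun k _ => Nat.zero_le _)
      (Finset.mem_univ i)) hm
    have h1 := hcongs i
    have h2 : g' - (h • c + (h + 1) • d i) ∈ H i := by
      rw [hHfull_def, AddSubgroup.mem_iInf] at hgg
      exact hgg i
    have h3 := (H i).sub_mem h2 h1
    have he2 : g' - (h • c + (h + 1) • d i) - (g' - h • c - m i • d i)
        = m i • d i - (h + 1) • d i := by abel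
    rw [he2] at h3
    refine ⟨h + 1 - m i, by omega, ?_⟩
    rw [sub_nsmul (d i) (by omega : m i ≤ h + 1), ← sub_eq_add_neg]
    have h4 := (H i).neg_mem h3
    rwa [neg_sub] at h4
  set e : Fin h → ℕ := fun i => Nat.find (hex i) with he_def
  have hespec : ∀ i, 0 < e i ∧ (e i) • d i ∈ H i := fun i => Nat.find_spec (hex i)
  have hemin : ∀ i, ∀ n, n < e i → ¬ (0 < n ∧ n • d i ∈ H i) := fun i n hn =>
    Nat.find_min (hex i) hn
  have he2 : ∀ i, 2 ≤ e i := by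
    intro i
    by_contra hlt
    have he1 : e i = 1 := by have := (hespec i).1; omega
    have := (hespec i).2
    rw [he1, one_nsmul] at this
    exact hdH i this
  -- the magic coset
  set gstar : G := h • c + ∑ i, (e i - 1) • d i with hgstar_def
  -- every element of itSum A h in the coset gstar + Hfull equals ∑ i, a i
  have huniq : ∀ g' ∈ itSum A h, g' - gstar ∈ Hfull → g' = ∑ i, a i := by
    intro g' hg' hgs
    obtain ⟨m, hm, ⟨y, hy, hgy⟩, hcongs⟩ := hcong g' hg'
    have hmge : ∀ i, e i - 1 ≤ m i := by
      intro i
      by_contra hlt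
      push_neg at hlt
      have hg1 : gstar - h • c - (e i - 1) • d i ∈ H i := by
        have hid2 : gstar - h • c - (e i - 1) • d i
            = ∑ k ∈ Finset.univ.erase i, (e k - 1) • d k := by
          rw [hgstar_def,
            ← Finset.add_sum_erase _ (fun k => (e k - 1) • d k) (Finset.mem_univ i)]
          abel
        rw [hid2]
        exact AddSubgroup.sum_mem _ (fun k hk =>
          (H i).nsmul_mem (hdij k i (Finset.ne_of_mem_erase hk)) _)
      have hg2 : g' - h • c - m i • d i ∈ H i := hcongs i
      have hg3 : g' - gstar ∈ H i := by
        rw [hHfull_def, AddSubgroup.mem_iInf] at hgs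
        exact hgs i
      have hcomb : ((e i - 1) - m i) • d i ∈ H i := by
        rw [sub_nsmul (d i) (by omega : m i ≤ e i - 1), ← sub_eq_add_neg]
        have heq2 : (e i - 1) • d i - m i • d i
            = ((g' - h • c - m i • d i) - (g' - gstar)) - (gstar - h • c - (e i - 1) • d i) := by
          abel
        rw [heq2]
        exact (H i).sub_mem ((H i).sub_mem hg2 hg3) hg1
      exact hemin i _ (by omega) ⟨by omega, hcomb⟩
    -- each m i must equal 1, and the total is h
    have hge1 : ∀ i, 1 ≤ m i := fun i => by have := hmge i; have := he2 i; omega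
    have hsum_ge : h ≤ ∑ i, m i := by
      calc h = ∑ _i : Fin h, 1 := by simp
      _ ≤ ∑ i, m i := Finset.sum_le_sum (fun i _ => hge1 i)
    have hM : ∑ i, m i = h := le_antisymm hm hsum_ge
    have hmone : ∀ i, m i = 1 := by
      intro i
      have h5 : (Finset.univ.erase i).card • 1 ≤ ∑ k ∈ Finset.univ.erase i, m k :=
        Finset.card_nsmul_le_sum _ _ _ (fun k _ => hge1 k)
      have h6 : m i + ∑ k ∈ Finset.univ.erase i, m k = ∑ k, m k :=
        Finset.add_sum_erase _ m (Finset.mem_univ i)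
      have h7 : (Finset.univ.erase i).card = h - 1 := by
        rw [Finset.card_erase_of_mem (Finset.mem_univ i)]
        simp
      rw [h7, smul_eq_mul, mul_one] at h5
      have := hge1 i
      omega
    have hzero : h - ∑ k, m k = 0 := by omega
    rw [hzero, itSum_zero, Set.mem_singleton_iff] at hy
    rw [hgy, hy, add_zero]
    exact Finset.sum_congr rfl (fun i _ => by rw [hmone i, one_nsmul])
  -- get two distinct such elements: contradiction
  have hbig : (((fun z => z + gstar) '' (Hfull : Set G)) \ (itSum A h)ᶜ).Infinite :=
    (hHfullinf.image ((add_left_injective gstar).injOn)).diff hcof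
  obtain ⟨x, hx, y, hy, hxy⟩ := hbig.nontrivial
  apply hxy
  obtain ⟨⟨kx, hkx, rfl⟩, hx2⟩ := hx
  obtain ⟨⟨ky, hky, rfl⟩, hy2⟩ := hy
  have ex := huniq _ (not_not.1 hx2) (by simpa using hkx)
  have ey := huniq _ (not_not.1 hy2) (by simpa using hky)
  rw [ex, ey]

end main

theorem stmt_9 {G : Type*} [AddCommGroup G] [Infinite G] (A : Set G) (h : ℕ)
    (hh : 2 ≤ h) (hA : SimEq (itSum A h) Set.univ) :
    {a ∈ A | ¬ ∃ k, 1 ≤ k ∧ SimEq (itSum (A \ {a}) k) Set.univ}.Finite ∧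
    {a ∈ A | ¬ ∃ k, 1 ≤ k ∧ SimEq (itSum (A \ {a}) k) Set.univ}.ncard ≤ h - 1 := by
  classical
  have hsim : ∀ X : Set G, SimEq X Set.univ ↔ (Xᶜ : Set G).Finite := by
    intro X
    unfold SimEq
    rw [symmDiff_def]
    have e1 : X \ Set.univ = ∅ := by simp
    have e2 : Set.univ \ X = Xᶜ := by simp [Set.compl_eq_univ_diff]
    show (X \ Set.univ ∪ Set.univ \ X).Finite ↔ _
    rw [e1, e2, Set.empty_union]
  set E := {a ∈ A | ¬ ∃ k, 1 ≤ k ∧ SimEq (itSum (A \ {a}) k) Set.univ} with hE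
  have hcof : ((itSum A h)ᶜ : Set G).Finite := (hsim _).1 hA
  have key : ∀ (a : Fin h → G), Function.Injective a → ¬ (∀ i, a i ∈ E) := by
    intro a hinj hall
    refine no_h_distinct A h hh hcof a hinj (fun i => (hall i).1) (fun i hex => ?_)
    obtain ⟨k, hk1, hk2⟩ := hex
    exact (hall i).2 ⟨k, hk1, (hsim _).2 hk2⟩
  have hfin : E.Finite := by
    by_contra hinf
    have hinf' : E.Infinite := hinf
    set f := Set.Infinite.natEmbedding E hinf' with hf
    refine key (fun i => (f i.val : G)) ?_ (fun i => (f i.val).2)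
    intro i j he
    exact Fin.ext (f.injective (Subtype.coe_injective he))
  refine ⟨hfin, ?_⟩
  by_contra hgt
  push_neg at hgt
  have hle : h ≤ E.ncard := by omega
  obtain ⟨t, hts, htc⟩ := Set.exists_subset_card_eq hle
  have htfin : t.Finite := hfin.subset hts
  haveI := htfin.fintype
  have hcardt : Fintype.card t = h := by
    rw [← Nat.card_eq_fintype_card, Nat.card_coe_set_eq, htc]
  set e := Fintype.equivFinOfCardEq hcardt with he_def
  refine key (fun i => ((e.symm i : t) : G)) ?_ (fun i => hts (e.symm i).2)
  intro i j hij
  have : e.symm i = e.symm j := Subtype.coe_injective hij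
  simpa using congrArg e this
end

section
/- Let G be an infinite abelian group and A ⊆ G with A ∪ 2A ∼ G and kA ∼ G for some finite k. Then the least such k is at most 5, i.e., 5A ∼ G or some smaller multiple already satisfies this. Consequently X_G(2) ≤ 5. -/
/-!
Write `E` for the finite complement of `A ∪ 2A`. If some `t` lies in both `jA` and `(j+1)A`,
then `t + (A ∪ 2A) ⊆ (j+2)A`, so `(j+2)A` is cofinite; with `j = 1` or `j = 2` this gives `3A` or
`4A`. Otherwise `A`, `2A` are disjoint and so are `2A`, `3A`, hence `3A ⊆ A ∪ E`: every `s ∈ 2A`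
moves `A` into itself up to finitely many points. Such translations form a submonoid, which
therefore contains all even sumsets `2nA`, while a point of an odd sumset `(2n+1)A` moves `A`
into `2A` up to finitely many points. As `2NA` and `(2N+1)A` are both cofinite they meet, and a
common point `u` moves `A` almost into `A` and almost into the disjoint set `2A`, so `u + A` and
hence `A` is finite, which is impossible when some `NA` is cofinite in the infinite group `G`.
-/

open Pointwise

open Filter

lemma itSum_eq_nsmul {G : Type*} [AddCommGroup G] (A : Set G) (n : ℕ) : itSum A n = n • A := by
  induction n with
  | zero => rw [zero_nsmul]; exact Set.singleton_zero
  | succ n ih => rw [succ_nsmul, ← ih]; rfl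

lemma simEq_univ_iff_mem_cofinite {G : Type*} [AddCommGroup G] (X : Set G) :
    SimEq X Set.univ ↔ X ∈ cofinite := by
  rw [SimEq, mem_cofinite, ← Set.top_eq_univ, symmDiff_top, hnot_eq_compl]

section AddMonoid

variable {M : Type*} [AddMonoid M]

lemma Set.Finite.nsmul {A : Set M} (hA : A.Finite) : ∀ n : ℕ, (n • A).Finite
  | 0 => by rw [zero_nsmul]; exact Set.finite_zero
  | n + 1 => by rw [succ_nsmul]; exact (hA.nsmul n).add hA

lemma infinite_of_nsmul_mem_cofinite [Infinite M] {A : Set M} {n : ℕ} (h : n • A ∈ cofinite) :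
    A.Infinite :=
  fun hA => compl_notMem h (hA.nsmul n).compl_mem_cofinite

def almostStabilizer (A : Set M) : AddSubmonoid M where
  carrier := {s : M | ((s +ᵥ A) \ A).Finite}
  zero_mem' := by simp
  add_mem' {s t} hs ht := by
    refine (hs.union (ht.vadd_set (a := s))).subset ?_
    rintro _ ⟨⟨a, ha, rfl⟩, hx⟩
    by_cases hta : t + a ∈ A
    · exact Or.inl ⟨⟨t + a, hta, (add_assoc s t a).symm⟩, hx⟩
    · exact Or.inr ⟨t + a, ⟨⟨a, ha, rfl⟩, hta⟩, (add_assoc s t a).symm⟩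

lemma mem_almostStabilizer {A : Set M} {s : M} :
    s ∈ almostStabilizer A ↔ ((s +ᵥ A) \ A).Finite :=
  Iff.rfl

end AddMonoid

section AddGroup

variable {G : Type*} [AddGroup G]

lemma vadd_set_mem_cofinite {X : Set G} (hX : X ∈ cofinite) (t : G) : t +ᵥ X ∈ cofinite := by
  rw [← neg_neg t, ← Set.preimage_vadd]
  exact (add_right_injective (-t)).tendsto_cofinite hX

lemma add_mem_cofinite {X Y : Set G} {t : G} (ht : t ∈ X) (hY : Y ∈ cofinite) :
    X + Y ∈ cofinite :=
  mem_of_superset (vadd_set_mem_cofinite hY t) (Set.vadd_set_subset_add ht)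

end AddGroup

section AddCommGroup

variable {G : Type*} [AddCommGroup G] {A : Set G}

lemma nsmul_mem_cofinite_of_mem_inter (hA : A ∪ 2 • A ∈ cofinite) {j : ℕ} {t : G}
    (ht : t ∈ j • A ∩ (j + 1) • A) : (j + 2) • A ∈ cofinite := by
  refine mem_of_superset (vadd_set_mem_cofinite hA t) ?_
  rw [Set.vadd_set_union]
  refine Set.union_subset ?_ ?_
  · rw [succ_nsmul _ (j + 1)]
    exact Set.vadd_set_subset_add ht.2
  · rw [add_nsmul]
    exact Set.vadd_set_subset_add ht.1

lemma two_mul_nsmul_subset_almostStabilizer (hA : A ∪ 2 • A ∈ cofinite)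
    (h23 : Disjoint (2 • A) (3 • A)) (n : ℕ) : (2 * n) • A ⊆ almostStabilizer A := by
  rw [mul_nsmul]
  refine AddSubmonoid.nsmul_subset fun s hs => mem_almostStabilizer.mpr ?_
  refine (mem_cofinite.mp hA).subset fun x ⟨hxs, hxA⟩ hx => ?_
  have hx3 : x ∈ 3 • A := by
    rw [succ_nsmul]
    exact Set.vadd_set_subset_add hs hxs
  exact hx.elim hxA fun hx2 => h23.notMem_of_mem_left hx2 hx3

lemma vadd_set_sdiff_two_nsmul_finite (hA : A ∪ 2 • A ∈ cofinite)
    (h23 : Disjoint (2 • A) (3 • A)) {n : ℕ} {u : G} (hu : u ∈ (2 * n + 1) • A) :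
    ((u +ᵥ A) \ 2 • A).Finite := by
  rw [succ_nsmul] at hu
  obtain ⟨v, hv, a, ha, rfl⟩ := hu
  have hvA : ((v +ᵥ A) \ A).Finite :=
    mem_almostStabilizer.mp (two_mul_nsmul_subset_almostStabilizer hA h23 n hv)
  refine hvA.vadd_set (a := a).subset ?_
  rintro _ ⟨⟨b, hb, rfl⟩, hx⟩
  refine ⟨v + b, ⟨⟨b, hb, rfl⟩, fun hvb => hx ?_⟩, by simp only [vadd_eq_add]; abel⟩
  rw [two_nsmul]
  exact ⟨a, ha, v + b, hvb, by simp only [vadd_eq_add]; abel⟩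

lemma not_nsmul_mem_cofinite_of_disjoint [Infinite G] (hA : A ∪ 2 • A ∈ cofinite)
    (h12 : Disjoint A (2 • A)) (h23 : Disjoint (2 • A) (3 • A)) (N : ℕ) :
    N • A ∉ cofinite := by
  intro hN
  have hAinf : A.Infinite := infinite_of_nsmul_mem_cofinite hN
  obtain ⟨a, ha⟩ := hAinf.nonempty
  obtain ⟨b, hb⟩ := nonempty_of_mem hN
  have heven : (2 * N) • A ∈ cofinite := by
    rw [two_mul, add_nsmul]
    exact add_mem_cofinite hb hN
  have hodd : (2 * N + 1) • A ∈ cofinite := by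
    rw [succ_nsmul, add_comm]
    exact add_mem_cofinite ha heven
  obtain ⟨u, hu_even, hu_odd⟩ := nonempty_of_mem (inter_mem heven hodd)
  have hA_sdiff : ((u +ᵥ A) \ A).Finite :=
    mem_almostStabilizer.mp (two_mul_nsmul_subset_almostStabilizer hA h23 N hu_even)
  have h2A_sdiff : ((u +ᵥ A) \ 2 • A).Finite := vadd_set_sdiff_two_nsmul_finite hA h23 hu_odd
  refine hAinf (Set.Finite.of_vadd_set (a := u) ((hA_sdiff.union h2A_sdiff).subset ?_))
  intro x hx
  by_cases hxA : x ∈ A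
  · exact Or.inr ⟨hx, h12.notMem_of_mem_left hxA⟩
  · exact Or.inl ⟨hx, hxA⟩

end AddCommGroup

theorem stmt_18 {G : Type*} [AddCommGroup G] [Infinite G] (A : Set G)
    (hA : SimEq (itSum A 1 ∪ itSum A 2) Set.univ)
    (hbasis : ∃ k, 1 ≤ k ∧ SimEq (itSum A k) Set.univ) :
    ∃ k, 1 ≤ k ∧ k ≤ 5 ∧ SimEq (itSum A k) Set.univ := by
  simp only [simEq_univ_iff_mem_cofinite, itSum_eq_nsmul, one_nsmul] at hA hbasis ⊢
  obtain ⟨N, -, hN⟩ := hbasis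
  by_cases h12 : Disjoint A (2 • A)
  · by_cases h23 : Disjoint (2 • A) (3 • A)
    · exact (not_nsmul_mem_cofinite_of_disjoint hA h12 h23 N hN).elim
    · obtain ⟨t, ht⟩ := Set.not_disjoint_iff_nonempty_inter.mp h23
      exact ⟨4, by norm_num, by norm_num, nsmul_mem_cofinite_of_mem_inter hA ht⟩
  · obtain ⟨t, ht⟩ := Set.not_disjoint_iff_nonempty_inter.mp h12
    exact ⟨3, by norm_num, by norm_num,
      nsmul_mem_cofinite_of_mem_inter (j := 1) hA (by rwa [one_nsmul])⟩
end
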